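/- Failure of the ordinary Whitney sum formula for the classes Q (Theorem 4.2(5) and the counterexample of Section 5): take R = ℤ[a] (a polynomial ring in one variable), F(u,v) = u + v − a·uv, a_0 = 1 and a_1 = a. Then in R⟦u⟧ one has Q_1(u,u) = 2u − a·u², Q_1(u) = u, and Q_0(u) = 1, so that Q_1(u,u) ≠ Q_1(u)·Q_0(u) + Q_0(u)·Q_1(u) = 2u. Hence the classes Q_r do not satisfy the Whitney sum formula and do not coincide with the cobordism Chern classes c_r^U. -/

import Mathlib

open Finset

variable {R : Type*} [CommRing R] {σ : Type*} [DecidableEq σ]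

/-- The power series `F(t, t_i)` viewed as a power series in `t` with coefficients in
`R⟦t_j : j ∈ σ⟧`, where `F(u,v) = ∑ c i j • u^i v^j`. -/
noncomputable def Fser (c : ℕ → ℕ → R) (i : σ) : PowerSeries (MvPowerSeries σ R) :=
  PowerSeries.mk fun p =>
    (fun d => if d = Finsupp.single i (d i) then c p (d i) else 0 : MvPowerSeries σ R)

/-- The class `Φ_r(t_i : i ∈ s)`: for `r ≤ card s` it is the coefficient of
`t^(card s - r)` in `∏_{i ∈ s} F(t, t_i)`, and `0` for `r > card s`. -/
noncomputable def PhiCl (c : ℕ → ℕ → R) (s : Finset σ) (r : ℤ) : MvPowerSeries σ R :=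
  if r ≤ (s.card : ℤ) then
    PowerSeries.coeff (R := MvPowerSeries σ R) ((s.card : ℤ) - r).toNat (∏ i ∈ s, Fser c i)
  else 0

/-- The class `Q_r(t_i : i ∈ s) = ∑_{k=0}^{card s - r} Φ_{r+k} · a_k` for `r ≤ card s`,
and `0` for `r > card s`. -/
noncomputable def QCl (c : ℕ → ℕ → R) (a : ℕ → R) (s : Finset σ) (r : ℤ) :
    MvPowerSeries σ R :=
  if r ≤ (s.card : ℤ) then
    ∑ k ∈ Finset.range (((s.card : ℤ) - r).toNat + 1),
      MvPowerSeries.C (σ := σ) (R := R) (a k) * PhiCl c s (r + (k : ℤ))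
  else 0

/-- The elementary symmetric power series in the variables `t_i`, `i ∈ s`. -/
noncomputable def esymmS (R : Type*) [CommRing R] (s : Finset σ) (r : ℕ) :
    MvPowerSeries σ R :=
  ∑ u ∈ s.powersetCard r, ∏ i ∈ u, MvPowerSeries.X i

/-- The coefficients of the formal group law `F(u,v) = u + v - a·uv` over `R = ℤ[a]`. -/
noncomputable def cFGL : ℕ → ℕ → Polynomial ℤ := fun i j =>
  if i = 1 ∧ j = 0 then 1
  else if i = 0 ∧ j = 1 then 1
  else if i = 1 ∧ j = 1 then -Polynomial.X
  else 0

/-- The coefficient sequence `a_0 = 1`, `a_1 = a`, `a_k = 0` for `k ≥ 2`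
(playing the role of `[ℂP^0], [ℂP^1], …` truncated, which is all that matters
in the given low-degree computation). -/
noncomputable def aFGL : ℕ → Polynomial ℤ := fun k =>
  if k = 0 then 1 else if k = 1 then Polynomial.X else 0

/-- Substitution `t_1 = t_2 = u` : `R⟦t_1, t_2⟧ → R⟦u⟧`. -/
noncomputable def diagSubst (φ : MvPowerSeries (Fin 2) (Polynomial ℤ)) :
    PowerSeries (Polynomial ℤ) :=
  PowerSeries.mk fun m => ∑ p ∈ Finset.HasAntidiagonal.antidiagonal m,
    MvPowerSeries.coeff (R := Polynomial ℤ) (Finsupp.single 0 p.1 + Finsupp.single 1 p.2) φ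

/-- Substitution `t_1 = u` : `R⟦t_1⟧ → R⟦u⟧`. -/
noncomputable def oneSubst (φ : MvPowerSeries (Fin 1) (Polynomial ℤ)) :
    PowerSeries (Polynomial ℤ) :=
  PowerSeries.mk fun m => MvPowerSeries.coeff (R := Polynomial ℤ) (Finsupp.single 0 m) φ

/-!
Each factor `F(t, t_i) = t_i + (1 - a t_i) t` is linear in `t`. With two variables this gives
`Φ₂ = t₁t₂` and `Φ₁ = t₁ + t₂ - 2a t₁t₂`, so `Q₁ = Φ₁ + aΦ₂ = t₁ + t₂ - a t₁t₂`; with one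
variable `Φ₁ = t` and `Φ₀ = 1 - a t`, so `Q₁ = t` and `Q₀ = Φ₀ + aΦ₁ = 1`. On the diagonal
`t₁ = t₂ = u` the coefficient `-a` of `u²` in `Q₁(u, u)` survives, whereas
`Q₁(u)Q₀(u) + Q₀(u)Q₁(u) = 2u`.
-/

lemma coeff_Fser (c : ℕ → ℕ → R) (i : σ) (p : ℕ) (d : σ →₀ ℕ) :
    MvPowerSeries.coeff d (PowerSeries.coeff p (Fser c i)) =
      if d = Finsupp.single i (d i) then c p (d i) else 0 :=
  congrArg (MvPowerSeries.coeff d) (PowerSeries.coeff_mk (R := MvPowerSeries σ R) p _)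

lemma Fser_cFGL (i : σ) :
    Fser cFGL i = PowerSeries.C (MvPowerSeries.X i) +
      PowerSeries.C (1 - MvPowerSeries.C Polynomial.X * MvPowerSeries.X i) * PowerSeries.X := by
  refine PowerSeries.ext fun p => MvPowerSeries.ext fun d => ?_
  rw [coeff_Fser]
  by_cases hd : d = Finsupp.single i (d i)
  · obtain ⟨n, rfl⟩ : ∃ n, d = Finsupp.single i n := ⟨_, hd⟩
    rcases p with _ | _ | p <;> rcases n with _ | _ | n <;>
      simp [cFGL, MvPowerSeries.coeff_X, MvPowerSeries.coeff_one, eq_comm (a := (0 : σ →₀ ℕ))]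
  · have hne : ∀ n, d ≠ Finsupp.single i n := fun n h => hd (by rw [h]; simp)
    have hd0 : d ≠ 0 := by simpa using hne 0
    rcases p with _ | _ | p <;> simp [hd, hne, hd0, MvPowerSeries.coeff_X, MvPowerSeries.coeff_one]

lemma PhiCl_card_sub (c : ℕ → ℕ → R) (s : Finset σ) (k : ℕ) :
    PhiCl c s (s.card - k) = PowerSeries.coeff k (∏ i ∈ s, Fser c i) := by
  rw [PhiCl, if_pos (by omega)]
  congr; omega

lemma QCl_card_sub (c : ℕ → ℕ → R) (a : ℕ → R) (s : Finset σ) (n : ℕ) :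
    QCl c a s (s.card - n) =
      ∑ k ∈ Finset.range (n + 1),
        MvPowerSeries.C (a k) * PowerSeries.coeff (n - k) (∏ i ∈ s, Fser c i) := by
  rw [QCl, if_pos (by omega), show ((s.card : ℤ) - (s.card - n)).toNat = n by omega]
  refine Finset.sum_congr rfl fun k hk => ?_
  have hkn := Finset.mem_range.1 hk
  rw [← PhiCl_card_sub, show (s.card : ℤ) - n + k = s.card - (n - k : ℕ) by omega]

lemma coeff_one_mul_C_add_C_mul_X {A : Type*} [CommRing A] (x y x' y' : A) :
    PowerSeries.coeff 1 ((PowerSeries.C x + PowerSeries.C y * PowerSeries.X) *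
      (PowerSeries.C x' + PowerSeries.C y' * PowerSeries.X)) = x * y' + y * x' := by
  have hexpand : (PowerSeries.C x + PowerSeries.C y * PowerSeries.X) *
      (PowerSeries.C x' + PowerSeries.C y' * PowerSeries.X) =
      PowerSeries.C (x * x') + PowerSeries.C (x * y' + y * x') * PowerSeries.X +
        PowerSeries.C (y * y') * PowerSeries.X ^ 2 := by
    simp only [map_add, map_mul]; ring
  simp only [hexpand, map_add, PowerSeries.coeff_C_mul, PowerSeries.coeff_C,
    PowerSeries.coeff_X_pow]
  norm_num

lemma QCl_cFGL_fin_two_one : QCl cFGL aFGL (Finset.univ : Finset (Fin 2)) 1 =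
    MvPowerSeries.X 0 + MvPowerSeries.X 1 -
      MvPowerSeries.C Polynomial.X * (MvPowerSeries.X 0 * MvPowerSeries.X 1) := by
  rw [show (1 : ℤ) = (Finset.univ : Finset (Fin 2)).card - (1 : ℕ) by simp, QCl_card_sub,
    Finset.sum_range_succ, Finset.sum_range_one, Fin.prod_univ_two, Fser_cFGL, Fser_cFGL,
    Nat.sub_zero, coeff_one_mul_C_add_C_mul_X]
  simp [aFGL]
  ring

lemma QCl_cFGL_fin_one_one :
    QCl cFGL aFGL (Finset.univ : Finset (Fin 1)) 1 = MvPowerSeries.X 0 := by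
  rw [show (1 : ℤ) = (Finset.univ : Finset (Fin 1)).card - (0 : ℕ) by simp, QCl_card_sub,
    Fin.prod_univ_one, Fser_cFGL]
  simp [aFGL]

lemma QCl_cFGL_fin_one_zero : QCl cFGL aFGL (Finset.univ : Finset (Fin 1)) 0 = 1 := by
  rw [show (0 : ℤ) = (Finset.univ : Finset (Fin 1)).card - (1 : ℕ) by simp, QCl_card_sub,
    Fin.prod_univ_one, Fser_cFGL]
  simp [Finset.sum_range_succ, aFGL, PowerSeries.coeff_C]

lemma diagSubst_add (φ ψ : MvPowerSeries (Fin 2) (Polynomial ℤ)) :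
    diagSubst (φ + ψ) = diagSubst φ + diagSubst ψ := by
  ext m
  simp [diagSubst, Finset.sum_add_distrib]

lemma diagSubst_sub (φ ψ : MvPowerSeries (Fin 2) (Polynomial ℤ)) :
    diagSubst (φ - ψ) = diagSubst φ - diagSubst ψ := by
  ext m
  simp [diagSubst, Finset.sum_sub_distrib]

lemma diagSubst_monomial (d : Fin 2 →₀ ℕ) (c : Polynomial ℤ) :
    diagSubst (MvPowerSeries.monomial d c) = PowerSeries.monomial (d 0 + d 1) c := by
  ext m : 1
  have key (pq : ℕ × ℕ) :
      Finsupp.single 0 pq.1 + Finsupp.single 1 pq.2 = d ↔ pq = (d 0, d 1) := by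
    simp [Finsupp.ext_iff, Fin.forall_fin_two, Prod.ext_iff, eq_comm]
  simp [diagSubst, MvPowerSeries.coeff_monomial, key, PowerSeries.coeff_monomial, eq_comm]

lemma oneSubst_monomial (d : Fin 1 →₀ ℕ) (c : Polynomial ℤ) :
    oneSubst (MvPowerSeries.monomial d c) = PowerSeries.monomial (d 0) c := by
  ext m : 1
  simp [oneSubst, MvPowerSeries.coeff_monomial, PowerSeries.coeff_monomial, Finsupp.ext_iff,
    eq_comm]

lemma diagSubst_X (i : Fin 2) : diagSubst (MvPowerSeries.X i) = PowerSeries.X := by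
  rw [MvPowerSeries.X_def, diagSubst_monomial]
  fin_cases i <;> simp [PowerSeries.X_eq]

lemma diagSubst_C_mul_X_mul_X (c : Polynomial ℤ) :
    diagSubst (MvPowerSeries.C c * (MvPowerSeries.X 0 * MvPowerSeries.X 1)) =
      PowerSeries.C c * PowerSeries.X ^ 2 := by
  rw [MvPowerSeries.X_def, MvPowerSeries.X_def, MvPowerSeries.monomial_mul_monomial,
    ← MvPowerSeries.monomial_zero_eq_C_apply, MvPowerSeries.monomial_mul_monomial,
    diagSubst_monomial]
  ext m
  simp [PowerSeries.coeff_monomial]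

lemma oneSubst_X : oneSubst (MvPowerSeries.X 0) = PowerSeries.X := by
  rw [MvPowerSeries.X_def, oneSubst_monomial]
  simp [PowerSeries.X_eq]

lemma oneSubst_one : oneSubst 1 = 1 := by
  rw [← map_one (MvPowerSeries.C (σ := Fin 1) (R := Polynomial ℤ)),
    ← MvPowerSeries.monomial_zero_eq_C_apply, oneSubst_monomial]
  simp

/-- **Failure of the ordinary Whitney sum formula for the classes `Q`**
(Theorem 4.2(5) and the counterexample of Section 5). Over `R = ℤ[a]` with
`F(u,v) = u + v - a·uv`, `a_0 = 1`, `a_1 = a`, one has, in `R⟦u⟧`: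
`Q_1(u, u) = 2u - a·u²`, `Q_1(u) = u`, `Q_0(u) = 1`, and consequently
`Q_1(u, u) ≠ Q_1(u)·Q_0(u) + Q_0(u)·Q_1(u) = 2u`; hence the classes `Q_r` do not
satisfy the Whitney sum formula. -/
theorem Q_whitney_fails :
    diagSubst (QCl cFGL aFGL (Finset.univ : Finset (Fin 2)) 1) =
        2 * PowerSeries.X - PowerSeries.C (R := Polynomial ℤ) Polynomial.X * PowerSeries.X ^ 2 ∧
      oneSubst (QCl cFGL aFGL (Finset.univ : Finset (Fin 1)) 1) = PowerSeries.X ∧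
      oneSubst (QCl cFGL aFGL (Finset.univ : Finset (Fin 1)) 0) = 1 ∧
      diagSubst (QCl cFGL aFGL (Finset.univ : Finset (Fin 2)) 1) ≠
        oneSubst (QCl cFGL aFGL (Finset.univ : Finset (Fin 1)) 1) *
            oneSubst (QCl cFGL aFGL (Finset.univ : Finset (Fin 1)) 0) +
          oneSubst (QCl cFGL aFGL (Finset.univ : Finset (Fin 1)) 0) *
            oneSubst (QCl cFGL aFGL (Finset.univ : Finset (Fin 1)) 1) := by
  have hQ₂ : diagSubst (QCl cFGL aFGL (Finset.univ : Finset (Fin 2)) 1) =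
      2 * PowerSeries.X - PowerSeries.C Polynomial.X * PowerSeries.X ^ 2 := by
    rw [QCl_cFGL_fin_two_one, diagSubst_sub, diagSubst_add, diagSubst_X, diagSubst_X,
      diagSubst_C_mul_X_mul_X, two_mul]
  have hQ₁ : oneSubst (QCl cFGL aFGL (Finset.univ : Finset (Fin 1)) 1) = PowerSeries.X := by
    rw [QCl_cFGL_fin_one_one, oneSubst_X]
  have hQ₀ : oneSubst (QCl cFGL aFGL (Finset.univ : Finset (Fin 1)) 0) = 1 := by
    rw [QCl_cFGL_fin_one_zero, oneSubst_one]
  refine ⟨hQ₂, hQ₁, hQ₀, fun h => ?_⟩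
  rw [hQ₂, hQ₁, hQ₀] at h
  have h2 := congrArg (PowerSeries.coeff 2) h
  simp [two_mul, PowerSeries.coeff_X] at h2
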